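/- arXiv:2406.11821 — 3 statements merged into one kernel-verified Lean document; each statement's English description precedes it below -/
import Mathlib

section
/- Let {X_{ij} : 1 ≤ i ≤ k, 1 ≤ j ≤ n-k} be the orthonormal basis X_{ij} = (√2/2)·[[0, E_{ij}],[E_{ij}^T, 0]] of the tangent space at diag(I_k, -I_{n-k}), where E_{ij} is the k×(n-k) matrix unit. Then for any tangent vectors X = [[0,X₀],[X₀^T,0]] and Y = [[0,Y₀],[Y₀^T,0]], the sum Σ_{i,j} (1/2)·tr(X_{ij}² X Y - X X_{ij} Y X_{ij}) equals ((n-2)/8)·tr(XY). -/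
/-!
Writing a tangent vector at `diag(I_k, -I_m)` as `S B = [[0, B], [Bᵀ, 0]]`, one has
`S A * S B = diag(A Bᵀ, Aᵀ B)`, so every trace in the sum reduces to traces of `k × k` and
`m × m` blocks. Summing over the matrix units, `∑ E_ij E_ijᵀ = m • 1` and `∑ E_ijᵀ E_ij = k • 1`,
so the first term contributes `(k + m) tr(X₀ Y₀ᵀ)`, while the second term contributes
`2 ∑ X₀_ij Y₀_ij = 2 tr(X₀ Y₀ᵀ)`. With the normalisation `(√2/2)² = 1/2` and
`tr(S X₀ S Y₀) = 2 tr(X₀ Y₀ᵀ)` this gives the Einstein constant `(k + m - 2) / 8`.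
-/

open Matrix

namespace Matrix

variable {p q R : Type*} [Fintype p] [Fintype q] [CommRing R]

theorem trace_fromBlocks (A : Matrix p p R) (B : Matrix p q R) (C : Matrix q p R)
    (D : Matrix q q R) : (fromBlocks A B C D).trace = A.trace + D.trace := by
  simp [trace, Fintype.sum_sum_type]

theorem trace_transpose_mul_eq_trace_mul_transpose (A B : Matrix p q R) :
    (Aᵀ * B).trace = (A * Bᵀ).trace := by
  rw [← trace_transpose_mul, transpose_transpose]

def offDiagSymm (B : Matrix p q R) : Matrix (p ⊕ q) (p ⊕ q) R :=
  fromBlocks 0 B Bᵀ 0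

theorem offDiagSymm_mul_offDiagSymm (A B : Matrix p q R) :
    offDiagSymm A * offDiagSymm B = fromBlocks (A * Bᵀ) 0 0 (Aᵀ * B) := by
  simp [offDiagSymm, fromBlocks_multiply]

theorem trace_offDiagSymm_mul_offDiagSymm (A B : Matrix p q R) :
    (offDiagSymm A * offDiagSymm B).trace = 2 * (A * Bᵀ).trace := by
  rw [offDiagSymm_mul_offDiagSymm, trace_fromBlocks, trace_transpose_mul_eq_trace_mul_transpose]
  ring

theorem trace_offDiagSymm_sq_mul_mul (E X Y : Matrix p q R) :
    (offDiagSymm E * offDiagSymm E * offDiagSymm X * offDiagSymm Y).trace =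
      (E * Eᵀ * (X * Yᵀ)).trace + (Eᵀ * E * (Xᵀ * Y)).trace := by
  rw [Matrix.mul_assoc _ (offDiagSymm X), offDiagSymm_mul_offDiagSymm,
    offDiagSymm_mul_offDiagSymm, fromBlocks_multiply, trace_fromBlocks]
  simp

theorem trace_offDiagSymm_mul_mul_mul (X E Y : Matrix p q R) :
    (offDiagSymm X * offDiagSymm E * offDiagSymm Y * offDiagSymm E).trace =
      (X * Eᵀ * (Y * Eᵀ)).trace + (Xᵀ * E * (Yᵀ * E)).trace := by
  rw [Matrix.mul_assoc _ (offDiagSymm Y), offDiagSymm_mul_offDiagSymm,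
    offDiagSymm_mul_offDiagSymm, fromBlocks_multiply, trace_fromBlocks]
  simp

variable [DecidableEq p] [DecidableEq q]

theorem sum_single_mul_transpose_single :
    ∑ i : p, ∑ j : q, single i j (1 : R) * (single i j (1 : R))ᵀ = (Fintype.card q : R) • 1 := by
  simp_rw [transpose_single, single_mul_single_same, mul_one, Finset.sum_const, Finset.card_univ,
    ← Finset.smul_sum, sum_single_one, Nat.cast_smul_eq_nsmul]

theorem sum_transpose_single_mul_single :
    ∑ i : p, ∑ j : q, (single i j (1 : R))ᵀ * single i j (1 : R) = (Fintype.card p : R) • 1 := by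
  rw [Finset.sum_comm]
  simp_rw [transpose_single, single_mul_single_same, mul_one, Finset.sum_const, Finset.card_univ,
    ← Finset.smul_sum, sum_single_one, Nat.cast_smul_eq_nsmul]

theorem trace_mul_transpose_single_mul_mul_transpose_single (X Y : Matrix p q R) (i : p) (j : q) :
    (X * (single i j (1 : R))ᵀ * (Y * (single i j (1 : R))ᵀ)).trace = X i j * Y i j := by
  rw [transpose_single, Matrix.mul_assoc, trace_mul_comm, ← Matrix.mul_assoc, single_mul_mul_single,
    trace_single_mul]
  simp [mul_comm]

theorem trace_transpose_mul_single_mul_transpose_mul_single (X Y : Matrix p q R) (i : p) (j : q) :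
    (Xᵀ * single i j (1 : R) * (Yᵀ * single i j (1 : R))).trace = X i j * Y i j := by
  rw [Matrix.mul_assoc, trace_mul_comm, ← Matrix.mul_assoc, single_mul_mul_single, trace_single_mul]
  simp [mul_comm]

theorem sum_single_trace_ricci_offDiagSymm (X Y : Matrix p q R) :
    ∑ i : p, ∑ j : q,
      (offDiagSymm (single i j 1) * offDiagSymm (single i j 1) * offDiagSymm X * offDiagSymm Y -
        offDiagSymm X * offDiagSymm (single i j 1) * offDiagSymm Y *
          offDiagSymm (single i j (1 : R))).trace =
      (Fintype.card p + Fintype.card q - 2) * (X * Yᵀ).trace := by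
  have hEEt : ∑ i : p, ∑ j : q, (single i j (1 : R) * (single i j (1 : R))ᵀ * (X * Yᵀ)).trace =
      Fintype.card q * (X * Yᵀ).trace := by
    simp_rw [← trace_sum, ← Finset.sum_mul, sum_single_mul_transpose_single, smul_mul, one_mul,
      trace_smul, smul_eq_mul]
  have hEtE : ∑ i : p, ∑ j : q, ((single i j (1 : R))ᵀ * single i j (1 : R) * (Xᵀ * Y)).trace =
      Fintype.card p * (X * Yᵀ).trace := by
    simp_rw [← trace_sum, ← Finset.sum_mul, sum_transpose_single_mul_single, smul_mul, one_mul,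
      trace_smul, smul_eq_mul, trace_transpose_mul_eq_trace_mul_transpose]
  have hXY : ∑ i : p, ∑ j : q, X i j * Y i j = (X * Yᵀ).trace := sum_hadamard_eq X Y
  simp_rw [trace_sub, trace_offDiagSymm_sq_mul_mul, trace_offDiagSymm_mul_mul_mul,
    trace_mul_transpose_single_mul_mul_transpose_single,
    trace_transpose_mul_single_mul_transpose_mul_single, Finset.sum_sub_distrib,
    Finset.sum_add_distrib, hEEt, hEtE, hXY]
  ring

end Matrix

theorem ricci_curvature_grassmannian (k m : ℕ)
    (X₀ Y₀ : Matrix (Fin k) (Fin m) ℝ)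
    (X Y : Matrix (Fin k ⊕ Fin m) (Fin k ⊕ Fin m) ℝ)
    (hX : X = Matrix.fromBlocks 0 X₀ X₀ᵀ 0)
    (hY : Y = Matrix.fromBlocks 0 Y₀ Y₀ᵀ 0) :
    (∑ i : Fin k, ∑ j : Fin m,
      (1/2 : ℝ) *
        (let Xij : Matrix (Fin k ⊕ Fin m) (Fin k ⊕ Fin m) ℝ :=
          (Real.sqrt 2 / 2) •
            Matrix.fromBlocks 0 (Matrix.single i j (1 : ℝ))
              (Matrix.single i j (1 : ℝ))ᵀ 0
        (Xij * Xij * X * Y - X * Xij * Y * Xij).trace)) =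
      (((k : ℝ) + m - 2) / 8) * (X * Y).trace := by
  have hc : (Real.sqrt 2 / 2) * (Real.sqrt 2 / 2) = (1 / 2 : ℝ) := by
    rw [div_mul_div_comm, Real.mul_self_sqrt zero_le_two]
    norm_num
  subst hX hY
  simp only [← offDiagSymm.eq_1, smul_mul_assoc, mul_smul_comm, smul_smul, hc, ← smul_sub,
    trace_smul, smul_eq_mul, ← mul_assoc, ← Finset.mul_sum,
    sum_single_trace_ricci_offDiagSymm, trace_offDiagSymm_mul_offDiagSymm, Fintype.card_fin]
  ring
end

section
/- Let H = diag(H₁, H₂) with H₁ ∈ Sym(k), H₂ ∈ Sym(n-k), and define the Weingarten map S(H) on block anti-diagonal symmetric matrices X = [[0,X₀],[X₀^T,0]] by S(H)(X) = (1/2)·[[0, H₁X₀ - X₀H₂],[(H₁X₀ - X₀H₂)^T, 0]]. Then tr(S(H)(X)·Y) = ⟨sff(X,Y), H⟩ where sff(X,Y) = (1/2)·diag(X₀Y₀^T + Y₀X₀^T, -(X₀^T Y₀ + Y₀^T X₀)). -/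
open Matrix

lemma trace_fromBlocks' {k m : ℕ} (A : Matrix (Fin k) (Fin k) ℝ)
    (B : Matrix (Fin k) (Fin m) ℝ) (C : Matrix (Fin m) (Fin k) ℝ)
    (D : Matrix (Fin m) (Fin m) ℝ) :
    (Matrix.fromBlocks A B C D).trace = A.trace + D.trace := by
  simp [Matrix.trace, Matrix.diag, Fintype.sum_sum_type, Matrix.fromBlocks]

theorem weingarten_second_fundamental_form (k m : ℕ)
    (H₁ : Matrix (Fin k) (Fin k) ℝ) (H₂ : Matrix (Fin m) (Fin m) ℝ)
    (hH₁ : H₁ᵀ = H₁) (hH₂ : H₂ᵀ = H₂)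
    (X₀ Y₀ : Matrix (Fin k) (Fin m) ℝ) :
    (let H := Matrix.fromBlocks H₁ 0 0 H₂
     let Y := Matrix.fromBlocks 0 Y₀ Y₀ᵀ 0
     let SHX := (1/2 : ℝ) •
       Matrix.fromBlocks 0 (H₁ * X₀ - X₀ * H₂) (H₁ * X₀ - X₀ * H₂)ᵀ 0
     let sff := (1/2 : ℝ) •
       Matrix.fromBlocks (X₀ * Y₀ᵀ + Y₀ * X₀ᵀ) 0 0 (-(X₀ᵀ * Y₀ + Y₀ᵀ * X₀))
     (SHX * Y).trace = (sffᵀ * H).trace) := by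
  simp only [Matrix.smul_mul, Matrix.fromBlocks_multiply, Matrix.trace_smul,
    Matrix.fromBlocks_transpose, Matrix.transpose_smul,
    Matrix.transpose_sub, Matrix.transpose_mul, Matrix.transpose_transpose,
    Matrix.transpose_neg, Matrix.transpose_add, hH₁, hH₂,
    Matrix.zero_mul, Matrix.mul_zero, zero_add, add_zero, trace_fromBlocks',
    Matrix.transpose_zero,
    Matrix.sub_mul, Matrix.mul_sub, Matrix.add_mul, Matrix.neg_mul,
    Matrix.trace_sub, Matrix.trace_add, Matrix.trace_neg]
  have h1 : (H₁ * X₀ * Y₀ᵀ).trace = (Y₀ * X₀ᵀ * H₁).trace := by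
    rw [← Matrix.trace_transpose (Y₀ * X₀ᵀ * H₁), Matrix.transpose_mul,
      Matrix.transpose_mul, Matrix.transpose_transpose, hH₁]
    exact congrArg Matrix.trace (Matrix.mul_assoc _ _ _)
  have h2 : (X₀ * H₂ * Y₀ᵀ).trace = (Y₀ᵀ * X₀ * H₂).trace := by
    rw [Matrix.trace_mul_cycle]
  have h3 : (X₀ᵀ * H₁ * Y₀).trace = (X₀ * Y₀ᵀ * H₁).trace := by
    rw [← Matrix.trace_transpose (X₀ * Y₀ᵀ * H₁), Matrix.transpose_mul,
      Matrix.transpose_mul, Matrix.transpose_transpose, hH₁,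
      Matrix.trace_mul_cycle X₀ᵀ H₁ Y₀, Matrix.trace_mul_comm]
  have h4 : (H₂ * X₀ᵀ * Y₀).trace = (X₀ᵀ * Y₀ * H₂).trace :=
    (Matrix.trace_mul_cycle X₀ᵀ Y₀ H₂).symm
  rw [h1, h2, h3, h4]; ring
end

section
/- In Gr(2,4) (involution model at base point diag(1,1,-1,-1)), there exist orthonormal tangent vectors X₁, Y₁, X₂, Y₂ with span{X₁,Y₁} orthogonal to span{X₂,Y₂} such that κ(X₁,Y₁) + κ(X₂,Y₂) = 1/2, where κ(X,Y) = (1/4)‖XY - YX‖² for orthonormal X, Y. There also exist such orthonormal quadruples with κ(X₁,Y₁) + κ(X₂,Y₂) = 0. -/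
open Matrix

/-- A tangent vector to `Gr(2,4)` in the involution model at the base point
`diag(1,1,-1,-1)`: a symmetric block anti-diagonal matrix. -/
def IsTangentGr24 (X : Matrix (Fin 2 ⊕ Fin 2) (Fin 2 ⊕ Fin 2) ℝ) : Prop :=
  ∃ B : Matrix (Fin 2) (Fin 2) ℝ, X = Matrix.fromBlocks 0 B Bᵀ 0

/-- Sectional curvature of orthonormal tangent vectors `X`, `Y`:
`κ(X,Y) = (1/4)‖XY - YX‖²` (squared Frobenius norm). -/
noncomputable def kappaGr24 (X Y : Matrix (Fin 2 ⊕ Fin 2) (Fin 2 ⊕ Fin 2) ℝ) : ℝ :=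
  (1/4 : ℝ) * ((X * Y - Y * X)ᵀ * (X * Y - Y * X)).trace

/-- Orthonormal quadruple with mutually orthogonal spans. -/
def IsOrthonormalQuadruple (X₁ Y₁ X₂ Y₂ : Matrix (Fin 2 ⊕ Fin 2) (Fin 2 ⊕ Fin 2) ℝ) :
    Prop :=
  IsTangentGr24 X₁ ∧ IsTangentGr24 Y₁ ∧ IsTangentGr24 X₂ ∧ IsTangentGr24 Y₂ ∧
  (X₁ * X₁).trace = 1 ∧ (Y₁ * Y₁).trace = 1 ∧
  (X₂ * X₂).trace = 1 ∧ (Y₂ * Y₂).trace = 1 ∧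
  (X₁ * Y₁).trace = 0 ∧ (X₂ * Y₂).trace = 0 ∧
  (X₁ * X₂).trace = 0 ∧ (X₁ * Y₂).trace = 0 ∧
  (Y₁ * X₂).trace = 0 ∧ (Y₁ * Y₂).trace = 0

/-- Helper: the tangent vector determined by a `2 × 2` block `B`. -/
noncomputable def tvGr24 (B : Matrix (Fin 2) (Fin 2) ℝ) :
    Matrix (Fin 2 ⊕ Fin 2) (Fin 2 ⊕ Fin 2) ℝ :=
  Matrix.fromBlocks 0 B Bᵀ 0

theorem delta_invariant_bounds_attained :
    (∃ X₁ Y₁ X₂ Y₂ : Matrix (Fin 2 ⊕ Fin 2) (Fin 2 ⊕ Fin 2) ℝ,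
      IsOrthonormalQuadruple X₁ Y₁ X₂ Y₂ ∧
        kappaGr24 X₁ Y₁ + kappaGr24 X₂ Y₂ = 1/2) ∧
    (∃ X₁ Y₁ X₂ Y₂ : Matrix (Fin 2 ⊕ Fin 2) (Fin 2 ⊕ Fin 2) ℝ,
      IsOrthonormalQuadruple X₁ Y₁ X₂ Y₂ ∧
        kappaGr24 X₁ Y₁ + kappaGr24 X₂ Y₂ = 0) := by
  constructor
  · refine ⟨tvGr24 !![(1:ℝ)/2, 0; 0, 1/2], tvGr24 !![0, (1:ℝ)/2; -(1/2), 0],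
      tvGr24 !![(1:ℝ)/2, 0; 0, -(1/2)], tvGr24 !![0, (1:ℝ)/2; 1/2, 0],
      ⟨⟨_, rfl⟩, ⟨_, rfl⟩, ⟨_, rfl⟩, ⟨_, rfl⟩, ?_, ?_, ?_, ?_, ?_, ?_, ?_, ?_, ?_, ?_⟩, ?_⟩ <;>
    · simp [tvGr24, kappaGr24, Matrix.trace, Matrix.mul_apply, Fintype.sum_sum_type,
        Fin.sum_univ_two, Matrix.fromBlocks, Matrix.transpose, Matrix.vecHead, Matrix.vecTail]
      try norm_num
  · refine ⟨tvGr24 !![(1:ℝ)/2, 0; 0, 1/2], tvGr24 !![(1:ℝ)/2, 0; 0, -(1/2)],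
      tvGr24 !![0, (1:ℝ)/2; 1/2, 0], tvGr24 !![0, (1:ℝ)/2; -(1/2), 0],
      ⟨⟨_, rfl⟩, ⟨_, rfl⟩, ⟨_, rfl⟩, ⟨_, rfl⟩, ?_, ?_, ?_, ?_, ?_, ?_, ?_, ?_, ?_, ?_⟩, ?_⟩ <;>
    · simp [tvGr24, kappaGr24, Matrix.trace, Matrix.mul_apply, Fintype.sum_sum_type,
        Fin.sum_univ_two, Matrix.fromBlocks, Matrix.transpose, Matrix.vecHead, Matrix.vecTail]
      try norm_num
end
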